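/- Let G be a free abelian group of finite rank r, R a right noetherian G-graded ring, J a gr-prime ideal of R, and R_J = (R/J)[E_J^{-1}] the right ring of fractions of R/J with respect to the set E_J of homogeneous regular elements of R/J. Then the center Z(R_J), which is a graded subring of R_J, has identity component Z(R_J)_1 (the degree-zero part) equal to a field, and Z(R_J) is isomorphic, as a ring, to a commutative Laurent polynomial ring over the field Z(R_J)_1 in s indeterminates for some s with 0 ≤ s ≤ r. -/

import Mathlib

/-- A graded two-sided ideal. -/
def IsGradedTwoSidedIdeal {G R : Type*} [AddCommGroup G] [DecidableEq G] [Ring R]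
    (𝒜 : G → AddSubgroup R) [GradedRing 𝒜] (I : AddSubgroup R) : Prop :=
  (∀ a ∈ I, ∀ r : R, a * r ∈ I) ∧
  (∀ a ∈ I, ∀ r : R, r * a ∈ I) ∧
  (∀ a ∈ I, ∀ g : G, (DirectSum.decompose 𝒜 a g : R) ∈ I)

/-- A graded two-sided ideal `J` is gr-prime if it is proper and, for homogeneous
`a, b`, `aRb ⊆ J` implies `a ∈ J` or `b ∈ J`. -/
def IsGrPrimeIdeal {G R : Type*} [AddCommGroup G] [DecidableEq G] [Ring R]
    (𝒜 : G → AddSubgroup R) [GradedRing 𝒜] (J : AddSubgroup R) : Prop :=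
  IsGradedTwoSidedIdeal 𝒜 J ∧ J ≠ ⊤ ∧
  ∀ a b : R, SetLike.IsHomogeneousElem 𝒜 a → SetLike.IsHomogeneousElem 𝒜 b →
    (∀ r : R, a * r * b ∈ J) → a ∈ J ∨ b ∈ J

/-- A ring is right noetherian if it has no infinite strictly ascending chain of right
ideals. -/
def RightNoetherian (R : Type*) [Ring R] : Prop :=
  ∀ f : ℕ → AddSubgroup R, (∀ n, ∀ a ∈ f n, ∀ r : R, a * r ∈ f n) → ¬ StrictMono f

/-- The degree-zero (identity-component) part of the center of a `G`-graded ring, as a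
subring. -/
def centerDegZero {G Q : Type*} [AddCommGroup G] [DecidableEq G] [Ring Q]
    (𝒞 : G → AddSubgroup Q) [GradedRing 𝒞] : Subring Q where
  carrier := {x : Q | x ∈ Subring.center Q ∧ x ∈ 𝒞 0}
  zero_mem' := ⟨Subring.zero_mem _, (𝒞 0).zero_mem⟩
  one_mem' := ⟨Subring.one_mem _, SetLike.GradedOne.one_mem⟩
  add_mem' := fun ha hb => ⟨Subring.add_mem _ ha.1 hb.1, (𝒞 0).add_mem ha.2 hb.2⟩
  neg_mem' := fun ha => ⟨Subring.neg_mem _ ha.1, (𝒞 0).neg_mem ha.2⟩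
  mul_mem' := fun ha hb =>
    ⟨Subring.mul_mem _ ha.1 hb.1, by simpa using SetLike.mul_mem_graded ha.2 hb.2⟩

section Aux

open DirectSum

variable {G Q : Type*} [AddCommGroup G] [DecidableEq G] [Ring Q]
  (𝒞 : G → AddSubgroup Q) [GradedRing 𝒞]

theorem aux_center_decompose_mem {x : Q} (hx : x ∈ Subring.center Q) (g : G) :
    (DirectSum.decompose 𝒞 x g : Q) ∈ Subring.center Q := by
  rw [Subring.mem_center_iff]
  intro q
  induction q using DirectSum.Decomposition.inductionOn 𝒞 with
  | zero => simp
  | @homogeneous h q =>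
    have hq : (q : Q) ∈ 𝒞 h := q.2
    calc (q : Q) * (decompose 𝒞 x g : Q) = (decompose 𝒞 ((q : Q) * x) (h + g) : Q) :=
          (coe_decompose_mul_add_of_left_mem 𝒞 hq).symm
      _ = (decompose 𝒞 (x * (q : Q)) (g + h) : Q) := by
          rw [Subring.mem_center_iff] at hx
          rw [hx, add_comm]
      _ = (decompose 𝒞 x g : Q) * q := coe_decompose_mul_add_of_right_mem 𝒞 hq
  | add a b ha hb => rw [add_mul, mul_add, ha, hb]

theorem aux_mem_of_decompose_ne {v : Q} {g : G}
    (h : ∀ h : G, h ≠ g → (DirectSum.decompose 𝒞 v h : Q) = 0) : v ∈ 𝒞 g := by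
  classical
  rw [← DirectSum.sum_support_decompose 𝒞 v]
  apply AddSubgroup.sum_mem
  intro i hi
  rcases eq_or_ne i g with rfl | hig
  · exact SetLike.coe_mem _
  · rw [h i hig]; exact (𝒞 g).zero_mem

theorem aux_decompose_map {R : Type*} [Ring R] (ℬ : G → AddSubgroup R) [GradedRing ℬ]
    (F : R →+* Q) (hF : ∀ g : G, ∀ x ∈ ℬ g, F x ∈ 𝒞 g) (a : R) (g : G) :
    F (DirectSum.decompose ℬ a g) = DirectSum.decompose 𝒞 (F a) g := by
  induction a using DirectSum.Decomposition.inductionOn ℬ with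
  | zero => simp
  | @homogeneous h a =>
    have ha : (a : R) ∈ ℬ h := a.2
    rcases eq_or_ne g h with rfl | hgh
    · rw [DirectSum.decompose_of_mem_same ℬ ha,
        DirectSum.decompose_of_mem_same 𝒞 (hF g _ ha)]
    · rw [DirectSum.decompose_of_mem_ne ℬ ha hgh.symm,
        DirectSum.decompose_of_mem_ne 𝒞 (hF h _ ha) hgh.symm, map_zero]
  | add a b iha ihb =>
    have h1 : (DirectSum.decompose ℬ (a + b) g : R)
        = (DirectSum.decompose ℬ a g : R) + (DirectSum.decompose ℬ b g : R) := by
      rw [DirectSum.decompose_add]; rfl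
    have h2 : (DirectSum.decompose 𝒞 (F a + F b) g : Q)
        = (DirectSum.decompose 𝒞 (F a) g : Q) + (DirectSum.decompose 𝒞 (F b) g : Q) := by
      rw [DirectSum.decompose_add]; rfl
    rw [h1, map_add F, iha, ihb, map_add F, h2]

/-- inverse of a homogeneous unit is homogeneous of opposite degree -/
theorem aux_inv_mem {u : Qˣ} {g : G} (hu : (u : Q) ∈ 𝒞 g) : ((u⁻¹ : Qˣ) : Q) ∈ 𝒞 (-g) := by
  apply aux_mem_of_decompose_ne 𝒞
  intro h hh
  have h1 : ((1 : Q)) = (u : Q) * ((u⁻¹ : Qˣ) : Q) := (Units.mul_inv u).symm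
  have h2 : (DirectSum.decompose 𝒞 ((u : Q) * ((u⁻¹ : Qˣ) : Q)) (g + h) : Q)
      = (u : Q) * (DirectSum.decompose 𝒞 ((u⁻¹ : Qˣ) : Q) h : Q) :=
    coe_decompose_mul_add_of_left_mem 𝒞 hu
  have h3 : g + h ≠ 0 := fun hc => hh (eq_neg_of_add_eq_zero_right hc)
  have h4 : (DirectSum.decompose 𝒞 (1 : Q) (g + h) : Q) = 0 :=
    DirectSum.decompose_of_mem_ne 𝒞 (SetLike.one_mem_graded 𝒞) (Ne.symm h3)
  rw [h1, h2] at h4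
  exact (Units.mul_right_eq_zero u).mp h4

theorem aux_zpow_mem {u : Qˣ} {g : G} (hu : (u : Q) ∈ 𝒞 g) (m : ℤ) :
    ((u ^ m : Qˣ) : Q) ∈ 𝒞 (m • g) := by
  cases m with
  | ofNat n =>
    have h : ((u ^ (n : ℤ) : Qˣ) : Q) = (u : Q) ^ n := by
      rw [zpow_natCast, Units.val_pow_eq_pow_val]
    rw [Int.ofNat_eq_coe, h]
    have := SetLike.pow_mem_graded n hu
    rwa [natCast_zsmul]
  | negSucc n =>
    have h1 : (u ^ Int.negSucc n) = (u ^ (n + 1))⁻¹ := by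
      rw [zpow_negSucc]
    have h2 : ((u ^ (n + 1) : Qˣ) : Q) ∈ 𝒞 ((n + 1) • g) := by
      rw [Units.val_pow_eq_pow_val]
      exact SetLike.pow_mem_graded _ hu
    have h3 := aux_inv_mem 𝒞 h2
    rw [h1]
    rwa [negSucc_zsmul]

theorem aux_inv_central {u : Qˣ} (hu : (u : Q) ∈ Subring.center Q) :
    ((u⁻¹ : Qˣ) : Q) ∈ Subring.center Q := by
  rw [Subring.mem_center_iff] at hu ⊢
  intro q
  calc q * ((u⁻¹ : Qˣ) : Q) = ((u⁻¹ : Qˣ) : Q) * (u : Q) * q * ((u⁻¹ : Qˣ) : Q) := by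
        rw [Units.inv_mul, one_mul]
    _ = ((u⁻¹ : Qˣ) : Q) * (q * (u : Q)) * ((u⁻¹ : Qˣ) : Q) := by
        rw [mul_assoc ((u⁻¹ : Qˣ) : Q), hu q]
    _ = ((u⁻¹ : Qˣ) : Q) * q * ((u : Q) * ((u⁻¹ : Qˣ) : Q)) := by
        rw [mul_assoc, mul_assoc, mul_assoc]
    _ = ((u⁻¹ : Qˣ) : Q) * q := by rw [Units.mul_inv, mul_one]

theorem aux_all_decompose_zero {v : Q} (h : ∀ g : G, (DirectSum.decompose 𝒞 v g : Q) = 0) :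
    v = 0 := by
  classical
  rw [← DirectSum.sum_support_decompose 𝒞 v]
  exact Finset.sum_eq_zero fun i _ => h i

theorem aux_decompose_sum {ι : Type*} (Fs : Finset ι) (t : ι → Q) (g : G) :
    (DirectSum.decompose 𝒞 (∑ i ∈ Fs, t i) g : Q)
      = ∑ i ∈ Fs, (DirectSum.decompose 𝒞 (t i) g : Q) := by
  let D : Q →+ Q :=
    { toFun := fun x => (DirectSum.decompose 𝒞 x g : Q)
      map_zero' := by simp
      map_add' := fun a b => by
        show (DirectSum.decompose 𝒞 (a + b) g : Q) = _
        rw [DirectSum.decompose_add]; rfl }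
  exact map_sum D t Fs

theorem aux_sum_component {ι : Type*} {Fs : Finset ι} {t : ι → Q} {d : ι → G}
    (hd : ∀ i ∈ Fs, t i ∈ 𝒞 (d i)) {i₀ : ι} (hi₀ : i₀ ∈ Fs)
    (hinj : ∀ i ∈ Fs, d i = d i₀ → i = i₀) (hsum : ∑ i ∈ Fs, t i = 0) : t i₀ = 0 := by
  have h1 : (DirectSum.decompose 𝒞 (∑ i ∈ Fs, t i) (d i₀) : Q)
      = ∑ i ∈ Fs, (DirectSum.decompose 𝒞 (t i) (d i₀) : Q) := aux_decompose_sum 𝒞 Fs t (d i₀)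
  rw [hsum] at h1
  simp only [DirectSum.decompose_zero] at h1
  have h2 : ∑ i ∈ Fs, (DirectSum.decompose 𝒞 (t i) (d i₀) : Q) = t i₀ := by
    rw [Finset.sum_eq_single_of_mem i₀ hi₀]
    · exact DirectSum.decompose_of_mem_same 𝒞 (hd i₀ hi₀)
    · intro i hi hne
      exact DirectSum.decompose_of_mem_ne 𝒞 (hd i hi) (fun hc => hne (hinj i hi hc))
  rw [h2] at h1
  simpa using h1.symm

end Aux

open DirectSum in
/-- Theorem 5(d): let `G` be a free abelian group of finite rank `r`, `R` a right
noetherian `G`-graded ring, `J` a gr-prime ideal of `R`, `R'` the quotient `R/J`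
(presented via a graded surjection `π` with kernel `J`), and `Q = R_J` the right ring of
fractions of `R'` with respect to the set `E` of homogeneous regular elements of `R'`
(presented via a graded embedding `f` inverting `E`, with `Q` carrying the extended
`G`-grading `𝒞`).  Then the center `Z(R_J)` is a graded subring of `R_J`, its identity
component `Z(R_J)_1` is a field, and `Z(R_J)` is isomorphic as a ring to a commutative
Laurent polynomial ring over `Z(R_J)_1` in `s ≤ r` indeterminates. -/
theorem center_of_localization_is_laurent
    {G : Type*} [AddCommGroup G] [DecidableEq G]
    (r : ℕ) (hG : Nonempty (G ≃+ (Fin r → ℤ)))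
    {R : Type*} [Ring R] (𝒜 : G → AddSubgroup R) [GradedRing 𝒜]
    (hnoeth : RightNoetherian R)
    (J : AddSubgroup R) (hJ : IsGrPrimeIdeal 𝒜 J)
    (R' : Type*) [Ring R'] (ℬ : G → AddSubgroup R') [GradedRing ℬ]
    (π : R →+* R') (hπsurj : Function.Surjective π)
    (hπker : ∀ x : R, π x = 0 ↔ x ∈ J)
    (hπgr : ∀ g : G, AddSubgroup.map π.toAddMonoidHom (𝒜 g) = ℬ g)
    (E : Set R') (hE : E = {s : R' | SetLike.IsHomogeneousElem ℬ s ∧ IsRegular s})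
    (Q : Type*) [Ring Q] (𝒞 : G → AddSubgroup Q) [GradedRing 𝒞] (f : R' →+* Q)
    (hfinj : Function.Injective f)
    (hfgr : ∀ g : G, ∀ x ∈ ℬ g, f x ∈ 𝒞 g)
    (hfunit : ∀ s ∈ E, IsUnit (f s))
    (hffrac : ∀ q : Q, ∃ a : R', ∃ s ∈ E, q * f s = f a) :
    (∀ x ∈ Subring.center Q, ∀ g : G,
        (DirectSum.decompose 𝒞 x g : Q) ∈ Subring.center Q) ∧
    IsField (centerDegZero 𝒞) ∧
    ∃ s : ℕ, s ≤ r ∧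
      Nonempty ((Subring.center Q) ≃+* AddMonoidAlgebra (centerDegZero 𝒞) (Fin s → ℤ)) := by
  classical
  obtain ⟨hJgr, hJtop, hJprime⟩ := hJ
  -- Nontriviality
  have h1R' : (1 : R') ≠ 0 := by
    intro h
    apply hJtop
    have h1J : (1 : R) ∈ J := (hπker 1).mp (by rw [map_one, h])
    rw [AddSubgroup.eq_top_iff']
    intro x
    have := hJgr.1 1 h1J x
    rwa [one_mul] at this
  have h1Q : (1 : Q) ≠ 0 := fun h => h1R' (hfinj (by rw [map_one, map_zero, h]))
  haveI : Nontrivial Q := ⟨1, 0, h1Q⟩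
  -- lifting homogeneous elements along π
  have hlift : ∀ (g : G), ∀ y ∈ ℬ g, ∃ x ∈ 𝒜 g, π x = y := by
    intro g y hy
    rw [← hπgr g] at hy
    obtain ⟨x, hx, hxy⟩ := hy
    exact ⟨x, hx, hxy⟩
  -- gr-primeness of the zero ideal of R'
  have hprime' : ∀ a c : R', SetLike.IsHomogeneousElem ℬ a → SetLike.IsHomogeneousElem ℬ c →
      (∀ r' : R', a * r' * c = 0) → a = 0 ∨ c = 0 := by
    rintro a c ⟨ga, hga⟩ ⟨gc, hgc⟩ hac
    obtain ⟨A, hA, rfl⟩ := hlift ga a hga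
    obtain ⟨C, hC, rfl⟩ := hlift gc c hgc
    have hmain := hJprime A C ⟨ga, hA⟩ ⟨gc, hC⟩ (fun rr => by
      have h := hac (π rr)
      rw [← map_mul, ← map_mul] at h
      exact (hπker _).mp h)
    rcases hmain with h | h
    · exact Or.inl ((hπker A).mpr h)
    · exact Or.inr ((hπker C).mpr h)
  -- pulling a homogeneous element of Q back to a homogeneous fraction
  have hpull : ∀ q : Q, ∀ g : G, q ∈ 𝒞 g → ∃ a : R', ∃ sE ∈ E, ∃ h : G,
      sE ∈ ℬ h ∧ a ∈ ℬ (g + h) ∧ q * f sE = f a ∧ (q ≠ 0 → a ≠ 0) := by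
    intro q g hq
    obtain ⟨a, sE, hsE, hqs⟩ := hffrac q
    have hsE' : SetLike.IsHomogeneousElem ℬ sE ∧ IsRegular sE := by rw [hE] at hsE; exact hsE
    obtain ⟨⟨h, hsh⟩, hsreg⟩ := hsE'
    refine ⟨a, sE, hsE, h, hsh, ?_, hqs, ?_⟩
    · have hfa : f a ∈ 𝒞 (g + h) := by
        rw [← hqs]; exact SetLike.mul_mem_graded hq (hfgr h _ hsh)
      apply aux_mem_of_decompose_ne ℬ
      intro g' hg'
      apply hfinj
      rw [aux_decompose_map 𝒞 ℬ f hfgr, map_zero,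
        DirectSum.decompose_of_mem_ne 𝒞 hfa (Ne.symm hg')]
    · intro hq0 ha0
      obtain ⟨u, hu⟩ := hfunit sE hsE
      apply hq0
      have : q * (u : Q) = 0 := by rw [hu, hqs, ha0, map_zero]
      exact (Units.mul_left_eq_zero u).mp this
  -- central homogeneous nonzero elements are not zero divisors
  have hreg : ∀ z : Q, z ∈ Subring.center Q → ∀ g : G, z ∈ 𝒞 g → z ≠ 0 →
      ∀ q : Q, z * q = 0 → q = 0 := by
    intro z hz g hzg hz0
    have hz' : ∀ X : Q, X * z = z * X := Subring.mem_center_iff.mp hz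
    obtain ⟨a, sE, hsE, h, hsh, hab, hqs, hane⟩ := hpull z g hzg
    have ha0 : a ≠ 0 := hane hz0
    intro q hzq
    apply aux_all_decompose_zero 𝒞
    intro hdeg
    by_contra hq0
    have hqhmem : (DirectSum.decompose 𝒞 q hdeg : Q) ∈ 𝒞 hdeg := SetLike.coe_mem _
    have hzqh : z * (DirectSum.decompose 𝒞 q hdeg : Q) = 0 := by
      have h2 := coe_decompose_mul_add_of_left_mem 𝒞 (b := q) hzg (j := hdeg)
      rw [hzq] at h2
      simpa using h2.symm
    obtain ⟨c, tE, htE, h2, hth, hcb, hct, hcne⟩ :=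
      hpull (DirectSum.decompose 𝒞 q hdeg : Q) hdeg hqhmem
    have hc0 : c ≠ 0 := hcne hq0
    have hzc : z * f c = 0 := by rw [← hct, ← mul_assoc, hzqh, zero_mul]
    have key : ∀ r' : R', a * r' * c = 0 := by
      intro r'
      apply hfinj
      rw [map_mul, map_mul, map_zero, ← hqs]
      calc z * f sE * f r' * f c = z * (f sE * f r') * f c := by rw [mul_assoc z]
        _ = (f sE * f r') * z * f c := by rw [hz' (f sE * f r')]
        _ = f sE * f r' * (z * f c) := by rw [mul_assoc]
        _ = 0 := by rw [hzc, mul_zero]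
    rcases hprime' a c ⟨_, hab⟩ ⟨_, hcb⟩ key with hh | hh
    · exact ha0 hh
    · exact hc0 hh
  -- central homogeneous nonzero elements are units
  have hZunit : ∀ z : Q, z ∈ Subring.center Q → ∀ g : G, z ∈ 𝒞 g → z ≠ 0 →
      ∃ u : Qˣ, (u : Q) = z := by
    intro z hz gg hzg hz0
    have hz' : ∀ X : Q, X * z = z * X := Subring.mem_center_iff.mp hz
    obtain ⟨a, sE, hsE, h, hsh, hab, hqs, hane⟩ := hpull z gg hzg
    have ha0 : a ≠ 0 := hane hz0
    have hsreg : IsRegular sE := by rw [hE] at hsE; exact hsE.2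
    -- a is left-regular killer
    have haL : ∀ bb : R', a * bb = 0 → bb = 0 := by
      intro bb hb
      apply aux_all_decompose_zero ℬ
      intro hd
      have h1 : a * (DirectSum.decompose ℬ bb hd : R') = 0 := by
        have h2 := coe_decompose_mul_add_of_left_mem ℬ (b := bb) hab (j := hd)
        rw [hb] at h2
        simpa using h2.symm
      have h3 : z * (f sE * f (DirectSum.decompose ℬ bb hd : R')) = 0 := by
        rw [← mul_assoc, hqs, ← map_mul, h1, map_zero]
      have h4 := hreg z hz gg hzg hz0 _ h3
      have h5 : f (sE * (DirectSum.decompose ℬ bb hd : R')) = 0 := by rw [map_mul]; exact h4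
      have h6 : sE * (DirectSum.decompose ℬ bb hd : R') = 0 := hfinj (by rw [h5, map_zero])
      have h7 : sE * (DirectSum.decompose ℬ bb hd : R') = sE * 0 := by rw [h6, mul_zero]
      exact hsreg.left h7
    have haR : ∀ bb : R', bb * a = 0 → bb = 0 := by
      intro bb hb
      apply aux_all_decompose_zero ℬ
      intro hd
      have h1 : (DirectSum.decompose ℬ bb hd : R') * a = 0 := by
        have h2 := coe_decompose_mul_add_of_right_mem ℬ (a := bb) hab (i := hd)
        rw [hb] at h2
        simpa using h2.symm
      have h3 : z * (f (DirectSum.decompose ℬ bb hd : R') * f sE) = 0 := by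
        have h4 : f (DirectSum.decompose ℬ bb hd : R') * (z * f sE) = 0 := by
          rw [hqs, ← map_mul, h1, map_zero]
        rw [← mul_assoc, hz' _, mul_assoc] at h4
        exact h4
      have h4 := hreg z hz gg hzg hz0 _ h3
      have h6 : (DirectSum.decompose ℬ bb hd : R') * sE = 0 := hfinj (by rw [map_mul]; simpa using h4)
      have h7 : (DirectSum.decompose ℬ bb hd : R') * sE = 0 * sE := by rw [h6, zero_mul]
      exact hsreg.right h7
    have hareg : IsRegular a := by
      constructor
      · intro x y hxy
        have : a * (x - y) = 0 := by
          simp only [mul_sub]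
          rw [show a * x = a * y from hxy, sub_self]
        have := haL _ this
        exact sub_eq_zero.mp this
      · intro x y hxy
        have : (x - y) * a = 0 := by
          simp only [sub_mul]
          rw [show x * a = y * a from hxy, sub_self]
        have := haR _ this
        exact sub_eq_zero.mp this
    have haE : a ∈ E := by rw [hE]; exact ⟨⟨_, hab⟩, hareg⟩
    obtain ⟨u, hu⟩ := hfunit a haE
    obtain ⟨v, hv⟩ := hfunit sE hsE
    refine ⟨u * v⁻¹, ?_⟩
    rw [Units.val_mul]
    have : z * (v : Q) = (u : Q) := by rw [hu, hv, hqs]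
    rw [← this, mul_assoc, Units.mul_inv, mul_one]
  -- Part 1
  have hZgr : ∀ x ∈ Subring.center Q, ∀ g : G,
      (DirectSum.decompose 𝒞 x g : Q) ∈ Subring.center Q :=
    fun x hx g => aux_center_decompose_mem 𝒞 hx g
  -- Part 2 : the degree-zero part of the center is a field
  have hfield : IsField (centerDegZero 𝒞) := by
    refine ⟨⟨0, 1, ?_⟩, ?_, ?_⟩
    · intro hc
      apply h1Q
      have := congrArg Subtype.val hc
      simpa using this.symm
    · intro x y
      apply Subtype.ext
      have hx : x.1 ∈ Subring.center Q ∧ x.1 ∈ 𝒞 0 := x.2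
      show x.1 * y.1 = y.1 * x.1
      exact (Subring.mem_center_iff.mp hx.1 y.1).symm
    · intro x hx0
      have hx : x.1 ∈ Subring.center Q ∧ x.1 ∈ 𝒞 0 := x.2
      have hxne : x.1 ≠ 0 := fun hc => hx0 (Subtype.ext hc)
      obtain ⟨u, hu⟩ := hZunit x.1 hx.1 0 hx.2 hxne
      have hinvc : ((u⁻¹ : Qˣ) : Q) ∈ Subring.center Q := aux_inv_central (hu ▸ hx.1)
      have hinv0 : ((u⁻¹ : Qˣ) : Q) ∈ 𝒞 0 := by
        have := aux_inv_mem 𝒞 (hu ▸ hx.2)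
        rwa [neg_zero] at this
      refine ⟨⟨((u⁻¹ : Qˣ) : Q), hinvc, hinv0⟩, ?_⟩
      apply Subtype.ext
      show x.1 * ((u⁻¹ : Qˣ) : Q) = 1
      rw [← hu, Units.mul_inv]
  -- the support subgroup H
  obtain ⟨e⟩ := hG
  let H : AddSubgroup G :=
    { carrier := {g : G | ∃ z : Q, z ∈ Subring.center Q ∧ z ∈ 𝒞 g ∧ z ≠ 0}
      zero_mem' := ⟨1, Subring.one_mem _, SetLike.one_mem_graded 𝒞, h1Q⟩
      add_mem' := by
        rintro g1 g2 ⟨z1, hz1c, hz1g, hz10⟩ ⟨z2, hz2c, hz2g, hz20⟩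
        exact ⟨z1 * z2, Subring.mul_mem _ hz1c hz2c, SetLike.mul_mem_graded hz1g hz2g,
          fun h0 => hz20 (hreg z1 hz1c _ hz1g hz10 z2 h0)⟩
      neg_mem' := by
        rintro g ⟨z, hzc, hzg, hz0⟩
        obtain ⟨u, hu⟩ := hZunit z hzc g hzg hz0
        exact ⟨((u⁻¹ : Qˣ) : Q), aux_inv_central (hu ▸ hzc), aux_inv_mem 𝒞 (hu ▸ hzg),
          Units.ne_zero _⟩ }
  -- basis of H
  let bG : Module.Basis (Fin r) ℤ G := Module.Basis.ofEquivFun e.toIntLinearEquiv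
  haveI : Module.Finite ℤ G := Module.Finite.of_basis bG
  obtain ⟨s, b⟩ := Submodule.basisOfPid bG (AddSubgroup.toIntSubmodule H)
  have hsr : s ≤ r := by
    have h1 : Module.finrank ℤ (AddSubgroup.toIntSubmodule H) = s := by
      rw [Module.finrank_eq_card_basis b, Fintype.card_fin]
    have h2 : Module.finrank ℤ G = r := by
      rw [Module.finrank_eq_card_basis bG, Fintype.card_fin]
    have h3 := Submodule.finrank_le (R := ℤ) (AddSubgroup.toIntSubmodule H)
    omega
  refine ⟨hZgr, hfield, s, hsr, ?_⟩
  -- chosen central units attached to the basis of H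
  have hbi : ∀ i : Fin s, ∃ z : Q, z ∈ Subring.center Q ∧ z ∈ 𝒞 ((b i : G)) ∧ z ≠ 0 :=
    fun i => (b i).2
  choose zz hzc hzg hzne using hbi
  have hzu : ∀ i, ∃ u : Qˣ, (u : Q) = zz i := fun i => hZunit _ (hzc i) _ (hzg i) (hzne i)
  choose uu huu using hzu
  let UZ : Fin s → (Subring.center Q)ˣ := fun i =>
    { val := ⟨zz i, hzc i⟩
      inv := ⟨(((uu i)⁻¹ : Qˣ) : Q), aux_inv_central (huu i ▸ hzc i)⟩
      val_inv := Subtype.ext (by show zz i * (((uu i)⁻¹ : Qˣ) : Q) = 1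
                                 rw [← huu i, Units.mul_inv])
      inv_val := Subtype.ext (by show (((uu i)⁻¹ : Qˣ) : Q) * zz i = 1
                                 rw [← huu i, Units.inv_mul]) }
  let U : (Fin s → ℤ) → (Subring.center Q)ˣ := fun n => ∏ i, (UZ i) ^ (n i)
  let χ : (Subring.center Q)ˣ →* Qˣ := Units.map (Subring.center Q).subtype.toMonoidHom
  have hχUZ : ∀ i, χ (UZ i) = uu i := by
    intro i
    apply Units.ext
    show ((UZ i : Subring.center Q) : Q) = (uu i : Q)
    exact (huu i).symm
  -- products of central homogeneous elements are homogeneous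
  have hprodmem : ∀ (F : Finset (Fin s)) (t : Fin s → Subring.center Q) (d : Fin s → G),
      (∀ k ∈ F, ((t k : Q)) ∈ 𝒞 (d k)) →
      (((∏ k ∈ F, t k : Subring.center Q)) : Q) ∈ 𝒞 (∑ k ∈ F, d k) := by
    intro F
    induction F using Finset.induction_on with
    | empty => intro t d _; simpa using SetLike.one_mem_graded 𝒞
    | @insert j F' hj ih =>
      intro t d hF
      rw [Finset.prod_insert hj, Finset.sum_insert hj]
      have : (((t j * ∏ k ∈ F', t k : Subring.center Q)) : Q)
          = (t j : Q) * ((∏ k ∈ F', t k : Subring.center Q) : Q) := rfl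
      rw [this]
      exact SetLike.mul_mem_graded (hF j (Finset.mem_insert_self j F'))
        (ih t d fun k hk => hF k (Finset.mem_insert_of_mem hk))
  -- the degree map
  let ν : (Fin s → ℤ) → G := fun n => ∑ i, n i • ((b i : G))
  have hνeq : ∀ n, ν n = ((b.equivFun.symm n : AddSubgroup.toIntSubmodule H) : G) := by
    intro n
    rw [Module.Basis.equivFun_symm_apply]
    show ∑ i, n i • ((b i : G)) = _
    rw [AddSubmonoidClass.coe_finset_sum]
    simp
  have hνinj : Function.Injective ν := by
    intro n m hnm
    rw [hνeq, hνeq] at hnm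
    exact b.equivFun.symm.injective (Subtype.coe_injective hnm)
  have hUval : ∀ n : Fin s → ℤ,
      (((U n : Subring.center Q)) : Q) ∈ 𝒞 (ν n) := by
    intro n
    have h0 : ((U n : Subring.center Q)) = ∏ i, ((UZ i ^ (n i) : (Subring.center Q)ˣ) : Subring.center Q) :=
      map_prod (Units.coeHom (Subring.center Q)) _ _
    rw [h0]
    apply hprodmem Finset.univ _ (fun i => n i • ((b i : G)))
    intro k _
    have h1 : (((UZ k ^ (n k) : (Subring.center Q)ˣ) : Subring.center Q) : Q)
        = ((uu k ^ (n k) : Qˣ) : Q) := by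
      have h2 : χ (UZ k ^ (n k)) = uu k ^ (n k) := by rw [map_zpow, hχUZ]
      have h3 : ((χ (UZ k ^ (n k)) : Qˣ) : Q)
          = (((UZ k ^ (n k) : (Subring.center Q)ˣ) : Subring.center Q) : Q) := rfl
      rw [← h3, h2]
    rw [h1]
    exact aux_zpow_mem 𝒞 (by rw [huu k]; exact hzg k) (n k)
  -- the monoid homomorphism and the ring homomorphism
  let φ : Multiplicative (Fin s → ℤ) →* (Subring.center Q) :=
    { toFun := fun n => ((U (Multiplicative.toAdd n) : Subring.center Q))
      map_one' := by
        show ((U 0 : Subring.center Q)) = 1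
        have h0 : U 0 = 1 := by
          show ∏ i, (UZ i) ^ ((0 : Fin s → ℤ) i) = 1
          simp
        rw [h0]
        rfl
      map_mul' := by
        intro n m
        show ((U (Multiplicative.toAdd n + Multiplicative.toAdd m) : Subring.center Q)) = _
        have h0 : U (Multiplicative.toAdd n + Multiplicative.toAdd m)
            = U (Multiplicative.toAdd n) * U (Multiplicative.toAdd m) := by
          show ∏ i, (UZ i) ^ ((Multiplicative.toAdd n + Multiplicative.toAdd m) i) = _
          rw [← Finset.prod_mul_distrib]
          exact Finset.prod_congr rfl fun i _ => by rw [Pi.add_apply, zpow_add]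
        rw [h0]
        rfl }
  let ι0 : (centerDegZero 𝒞) →+* (Subring.center Q) :=
    { toFun := fun x => ⟨x.1, (show x.1 ∈ Subring.center Q ∧ x.1 ∈ 𝒞 0 from x.2).1⟩
      map_one' := rfl
      map_mul' := fun _ _ => rfl
      map_zero' := rfl
      map_add' := fun _ _ => rfl }
  let Φ : AddMonoidAlgebra (centerDegZero 𝒞) (Fin s → ℤ) →+* (Subring.center Q) :=
    AddMonoidAlgebra.liftNCRingHom ι0 φ (fun x y => mul_comm _ _)
  have hΦsingle : ∀ (n : Fin s → ℤ) (c : centerDegZero 𝒞),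
      Φ (AddMonoidAlgebra.single n c) = ι0 c * φ (Multiplicative.ofAdd n) := fun n c =>
    AddMonoidAlgebra.liftNC_single _ _ _ _
  have hφν : ∀ n : Fin s → ℤ, ((φ (Multiplicative.ofAdd n) : Subring.center Q) : Q) ∈ 𝒞 (ν n) :=
    fun n => hUval n
  -- representation of Φ
  have hrep : ∀ p : AddMonoidAlgebra (centerDegZero 𝒞) (Fin s → ℤ),
      ((Φ p : Subring.center Q) : Q)
        = ∑ n ∈ p.coeff.support, ((p.coeff n : Q)) * ((φ (Multiplicative.ofAdd n) : Subring.center Q) : Q) := by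
    intro p
    have hp1 : p = ∑ n ∈ p.coeff.support, AddMonoidAlgebra.single n (p.coeff n) := (AddMonoidAlgebra.sum_coeff_single p).symm
    conv_lhs => rw [hp1]
    rw [map_sum Φ]
    rw [AddSubmonoidClass.coe_finset_sum]
    refine Finset.sum_congr rfl fun n hn => ?_
    rw [hΦsingle]
    rfl
  -- injectivity
  have hΦinj : Function.Injective Φ := by
    rw [injective_iff_map_eq_zero]
    intro p hp
    refine AddMonoidAlgebra.coeff_injective (Finsupp.ext fun n => ?_)
    show p.coeff n = 0
    by_cases hn : n ∈ p.coeff.support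
    · have hsum : ∑ m ∈ p.coeff.support,
          ((p.coeff m : Q)) * ((φ (Multiplicative.ofAdd m) : Subring.center Q) : Q) = 0 := by
        rw [← hrep, hp]
        rfl
      have hterm : ∀ m ∈ p.coeff.support,
          ((p.coeff m : Q)) * ((φ (Multiplicative.ofAdd m) : Subring.center Q) : Q) ∈ 𝒞 (ν m) := by
        intro m _
        have h1 : (p.coeff m : Q) ∈ 𝒞 0 := (show (p.coeff m : Q) ∈ Subring.center Q ∧ (p.coeff m : Q) ∈ 𝒞 0 from (p.coeff m).2).2
        have := SetLike.mul_mem_graded h1 (hφν m)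
        rwa [zero_add] at this
      have h0 := aux_sum_component 𝒞 hterm hn (fun m _ hdm => hνinj hdm) hsum
      have h2 : ((p.coeff n : Q)) * ((χ (U n) : Qˣ) : Q) = 0 := h0
      have h3 : (p.coeff n : Q) = 0 := (Units.mul_left_eq_zero (χ (U n))).mp h2
      exact Subtype.ext h3
    · exact Finsupp.notMem_support_iff.mp hn
  -- surjectivity
  have hΦsurj : Function.Surjective Φ := by
    intro z
    have hzQ : (z : Q) ∈ Subring.center Q := z.2
    suffices hS : z ∈ Φ.range by
      obtain ⟨p, hp⟩ := hS
      exact ⟨p, hp⟩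
    have hcomp : ∀ g : G, (⟨(DirectSum.decompose 𝒞 (z : Q) g : Q), hZgr _ z.2 g⟩
        : Subring.center Q) ∈ Φ.range := by
      intro g
      set w : Q := (DirectSum.decompose 𝒞 (z : Q) g : Q) with hw
      by_cases hw0 : w = 0
      · have : (⟨w, hZgr _ z.2 g⟩ : Subring.center Q) = 0 := Subtype.ext hw0
        rw [this]
        exact Subring.zero_mem _
      · have hwc : w ∈ Subring.center Q := hZgr _ z.2 g
        have hwg : w ∈ 𝒞 g := SetLike.coe_mem _
        have hgH : g ∈ H := ⟨w, hwc, hwg, hw0⟩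
        set gM : AddSubgroup.toIntSubmodule H := ⟨g, hgH⟩ with hgM
        set n : Fin s → ℤ := b.equivFun gM with hn
        have hng : ν n = g := by
          rw [hνeq, hn, LinearEquiv.symm_apply_apply]
        -- the unit of degree g
        have hUg : ((U n : Subring.center Q) : Q) ∈ 𝒞 g := hng ▸ hUval n
        set v : Qˣ := χ (U n) with hv
        have hvval : (v : Q) = ((U n : Subring.center Q) : Q) := rfl
        have hvc : (v : Q) ∈ Subring.center Q := ((U n : Subring.center Q)).2
        have hvinvc : ((v⁻¹ : Qˣ) : Q) ∈ Subring.center Q := aux_inv_central hvc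
        have hvinvg : ((v⁻¹ : Qˣ) : Q) ∈ 𝒞 (-g) := aux_inv_mem 𝒞 (hvval ▸ hUg)
        have hyc : w * ((v⁻¹ : Qˣ) : Q) ∈ Subring.center Q := Subring.mul_mem _ hwc hvinvc
        have hyg : w * ((v⁻¹ : Qˣ) : Q) ∈ 𝒞 0 := by
          have := SetLike.mul_mem_graded hwg hvinvg
          rwa [add_neg_cancel] at this
        set y : centerDegZero 𝒞 := ⟨w * ((v⁻¹ : Qˣ) : Q), hyc, hyg⟩ with hy
        refine ⟨AddMonoidAlgebra.single n y, ?_⟩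
        rw [hΦsingle]
        apply Subtype.ext
        show (y : Q) * ((φ (Multiplicative.ofAdd n) : Subring.center Q) : Q) = w
        have hφn : ((φ (Multiplicative.ofAdd n) : Subring.center Q) : Q) = (v : Q) := rfl
        rw [hφn]
        show w * ((v⁻¹ : Qˣ) : Q) * (v : Q) = w
        rw [mul_assoc, Units.inv_mul, mul_one]
    have hzsum : z = ∑ g ∈ (DirectSum.decompose 𝒞 (z : Q)).support,
        (⟨(DirectSum.decompose 𝒞 (z : Q) g : Q), hZgr _ z.2 g⟩ : Subring.center Q) := by
      apply Subtype.ext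
      rw [AddSubmonoidClass.coe_finset_sum]
      exact (DirectSum.sum_support_decompose 𝒞 (z : Q)).symm
    rw [hzsum]
    exact Subring.sum_mem _ fun g _ => hcomp g
  exact ⟨(RingEquiv.ofBijective Φ ⟨hΦinj, hΦsurj⟩).symm⟩
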